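/- For a bounded operator A between Hilbert spaces and any bounded operator B, the equality AA*A = AB*A holds if and only if P_A B P_{A*} = A, where P_A and P_{A*} are the orthogonal projections onto the closures of range(A) and range(A*). -/

import Mathlib

/-! If `A A* A = A B* A`, then `A (A* - B*) A = 0`. Since `ker A = (range A*)ᗮ` and an operator
vanishing on `range A` vanishes on its closure, this forces `P_{A*} (A* - B*) P_A = 0`, that is
`P_{A*} B* P_A = P_{A*} A* P_A = A*`, whose adjoint is `P_A B P_{A*} = A`. Conversely, from
`P_{A*} B* P_A = A*` one gets `A A* A = (A P_{A*}) B* (P_A A) = A B* A`. -/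

open ContinuousLinearMap

/-- The orthogonal projection onto the closure of the range of `A`. -/
noncomputable def projCR {E F : Type*} [NormedAddCommGroup E] [InnerProductSpace ℂ E]
    [NormedAddCommGroup F] [InnerProductSpace ℂ F] [CompleteSpace F]
    (A : E →L[ℂ] F) : F →L[ℂ] F :=
  (LinearMap.range (A : E →ₗ[ℂ] F)).topologicalClosure.subtypeL ∘L
    Submodule.orthogonalProjectionOnto (LinearMap.range (A : E →ₗ[ℂ] F)).topologicalClosure

variable {H K : Type*} [NormedAddCommGroup H] [InnerProductSpace ℂ H] [CompleteSpace H]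
  [NormedAddCommGroup K] [InnerProductSpace ℂ K] [CompleteSpace K]

section
variable {E F G : Type*} [NormedAddCommGroup E] [InnerProductSpace ℂ E]
  [NormedAddCommGroup F] [InnerProductSpace ℂ F] [CompleteSpace F]

theorem isSelfAdjoint_projCR (T : E →L[ℂ] F) : IsSelfAdjoint (projCR T) :=
  isSelfAdjoint_starProjection _

theorem projCR_comp_self (T : E →L[ℂ] F) : projCR T ∘L T = T := by
  ext x
  exact Submodule.starProjection_eq_self_iff.mpr
    (Submodule.le_topologicalClosure _ (LinearMap.mem_range_self _ x))

theorem comp_projCR_eq_zero [AddCommGroup G] [TopologicalSpace G] [T1Space G] [Module ℂ G]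
    {T : E →L[ℂ] F} {X : F →L[ℂ] G} (h : X ∘L T = 0) : X ∘L projCR T = 0 := by
  have hrange : LinearMap.range (T : E →ₗ[ℂ] F) ≤ LinearMap.ker (X : F →ₗ[ℂ] G) := by
    rintro _ ⟨x, rfl⟩
    exact DFunLike.congr_fun h x
  ext y
  exact Submodule.topologicalClosure_minimal _ hrange X.isClosed_ker
    (Submodule.starProjection_apply_mem _ y)

variable [CompleteSpace E]

theorem adjoint_comp_projCR (T : E →L[ℂ] F) : adjoint T ∘L projCR T = adjoint T := by
  simpa only [adjoint_comp, (isSelfAdjoint_projCR T).adjoint_eq] using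
    congrArg adjoint (projCR_comp_self T)

theorem projCR_adjoint_comp_eq_zero [NormedAddCommGroup G] [InnerProductSpace ℂ G] [CompleteSpace G]
    {T : E →L[ℂ] F} {Y : G →L[ℂ] E} (h : T ∘L Y = 0) : projCR (adjoint T) ∘L Y = 0 := by
  have h' : adjoint Y ∘L adjoint T = 0 := by rw [← adjoint_comp, h, map_zero]
  simpa only [adjoint_comp, adjoint_adjoint, (isSelfAdjoint_projCR _).adjoint_eq, map_zero] using
    congrArg adjoint (comp_projCR_eq_zero h')

end

theorem stmt2 (A B : H →L[ℂ] K) :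
    A ∘L ((adjoint A) ∘L A) = A ∘L ((adjoint B) ∘L A) ↔
      (projCR A) ∘L (B ∘L (projCR (adjoint A))) = A := by
  have hPA : projCR A ∘L A = A := projCR_comp_self A
  have hAQ : A ∘L projCR (adjoint A) = A := by
    simpa only [adjoint_adjoint] using adjoint_comp_projCR (adjoint A)
  have hadj : projCR A ∘L B ∘L projCR (adjoint A) = A ↔
      projCR (adjoint A) ∘L adjoint B ∘L projCR A = adjoint A := by
    rw [← adjoint.injective.eq_iff, adjoint_comp, adjoint_comp, (isSelfAdjoint_projCR A).adjoint_eq,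
      (isSelfAdjoint_projCR (adjoint A)).adjoint_eq, comp_assoc]
  rw [hadj]
  constructor
  · intro h
    have hdiff : A ∘L ((adjoint A - adjoint B) ∘L A) = 0 := by
      rw [sub_comp, comp_sub, h, sub_self]
    have hQP : (projCR (adjoint A) ∘L (adjoint A - adjoint B)) ∘L projCR A = 0 :=
      comp_projCR_eq_zero <| by rw [comp_assoc]; exact projCR_adjoint_comp_eq_zero hdiff
    rw [comp_sub, sub_comp, sub_eq_zero, comp_assoc, adjoint_comp_projCR,
      projCR_comp_self] at hQP
    rw [← comp_assoc, ← hQP]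
  · intro h
    calc A ∘L adjoint A ∘L A
        = A ∘L (projCR (adjoint A) ∘L adjoint B ∘L projCR A) ∘L A := by rw [h]
      _ = (A ∘L projCR (adjoint A)) ∘L adjoint B ∘L (projCR A ∘L A) := by
        simp only [comp_assoc]
      _ = A ∘L adjoint B ∘L A := by rw [hAQ, hPA]
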